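/- arXiv:2005.01824 — 3 statements merged into one kernel-verified Lean document; each statement's English description precedes it below -/
import Mathlib

section
/- Let t ≥ 2 and let G be a finite connected P_t-free graph. Then for all integers k, k' with k > t and k' > t, G has a C_k-coloring if and only if G has a C_{k'}-coloring. -/
/-- The cycle `C_k` on vertex set `ZMod k`: distinct vertices `u, v` are adjacent
iff `u - v = 1` or `v - u = 1`. -/
def cycleZMod (k : ℕ) : SimpleGraph (ZMod k) where
  Adj u v := u ≠ v ∧ (u - v = 1 ∨ v - u = 1)
  symm := by
    constructor
    intro u v h
    exact ⟨h.1.symm, h.2.symm⟩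
  loopless := by
    constructor
    intro u h
    exact h.1 rfl

/-- A graph is `P_t`-free if it has no induced subgraph isomorphic to the path on `t`
vertices, i.e. there is no graph embedding of the path graph on `t` vertices into it. -/
def PFree {V : Type*} (t : ℕ) (G : SimpleGraph V) : Prop :=
  IsEmpty (SimpleGraph.pathGraph t ↪g G)

/-!
Lifting along `ℤ → ZMod k`, a walk in `C_k` between `u` and `v` has an integer "winding"
`s ≡ v - u` with `|s| ≤ length` and `s ≡ length (mod 2)`; so an odd closed walk in `C_k` has
`s ≠ 0`, `k ∣ s`, and length at least `k`. In `G`, a shortest odd closed walk is an induced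
cycle, since a repeated vertex or a chord would split it into two shorter closed walks, one of
them odd. If `G → C_k` with `k > t` and `G` is not bipartite, the first `t` vertices of a
shortest odd closed walk thus form an induced `P_t`. So `G` is bipartite, and a bipartite graph
maps to every `C_{k'}` through an edge.
-/

open SimpleGraph

theorem cycleZMod_walk_exists_int_lift {k : ℕ} {u v : ZMod k} (w : (cycleZMod k).Walk u v) :
    ∃ s : ℤ, (s : ZMod k) = v - u ∧ |s| ≤ w.length ∧ Even (s + w.length) := by
  induction w with
  | nil => exact ⟨0, by simp⟩
  | @cons u x v h p ih =>
    obtain ⟨s, hs, hlen, hpar⟩ := ih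
    rw [abs_le] at hlen
    rw [Int.even_iff] at hpar
    simp only [Walk.length_cons, Nat.cast_add, Nat.cast_one, abs_le, Int.even_iff]
    rcases h.2 with h1 | h1
    · exact ⟨s - 1, by push_cast; linear_combination hs + h1, by omega, by omega⟩
    · exact ⟨s + 1, by push_cast; linear_combination hs - h1, by omega, by omega⟩

theorem cycleZMod_le_length_of_odd_loop {k : ℕ} {u : ZMod k} (w : (cycleZMod k).Walk u u)
    (hw : Odd w.length) : k ≤ w.length := by
  obtain ⟨s, hs, hlen, hpar⟩ := cycleZMod_walk_exists_int_lift w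
  rw [sub_self, ZMod.intCast_zmod_eq_zero_iff_dvd] at hs
  have hs0 : s ≠ 0 := by
    rintro rfl
    rw [zero_add, Int.even_coe_nat] at hpar
    exact Nat.not_even_iff_odd.2 hw hpar
  have := Int.le_of_dvd (abs_pos.2 hs0) ((dvd_abs _ _).2 hs)
  omega

namespace SimpleGraph.Walk

variable {V : Type*} {G : SimpleGraph V} {u : V}

def IsShortestOddLoop (w : G.Walk u u) : Prop :=
  Odd w.length ∧ ∀ v (c : G.Walk v v), Odd c.length → w.length ≤ c.length

theorem exists_isShortestOddLoop_of_not_colorable_two (h : ¬ G.Colorable 2) :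
    ∃ u, ∃ w : G.Walk u u, w.IsShortestOddLoop := by
  classical
  simp only [two_colorable_iff_forall_loop_even, not_forall, Nat.not_even_iff_odd] at h
  obtain ⟨u, w, hw⟩ := h
  have hex : ∃ n, ∃ u, ∃ w : G.Walk u u, Odd w.length ∧ w.length = n := ⟨_, u, w, hw, rfl⟩
  obtain ⟨u, w, hodd, hlen⟩ := Nat.find_spec hex
  exact ⟨u, w, hodd, fun v c hc => hlen ▸ Nat.find_min' hex ⟨v, c, hc, rfl⟩⟩

namespace IsShortestOddLoop

variable {w : G.Walk u u}

/-- Replacing the segment of `w` between positions `i` and `j` by `s`, or closing that segment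
with `s`, gives two closed walks of total length `w.length + 2 * s.length`; one of them is odd. -/
theorem min_le_length (hw : w.IsShortestOddLoop) {i j : ℕ} (hij : i ≤ j) (hj : j ≤ w.length)
    (s : G.Walk (w.getVert i) (w.getVert j)) : min (j - i) (w.length - (j - i)) ≤ s.length := by
  let segment : G.Walk (w.getVert i) (w.getVert j) :=
    ((w.drop i).take (j - i)).copy rfl (by rw [drop_getVert, Nat.add_sub_cancel' hij])
  have hA := hw.2 _ (segment.append s.reverse)
  have hB := hw.2 _ ((w.take i).append (s.append (w.drop j)))
  simp only [segment, length_append, length_reverse, length_copy, take_length, drop_length,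
    Nat.odd_iff] at hA hB
  have := Nat.odd_iff.1 hw.1
  omega

theorem getVert_injOn (hw : w.IsShortestOddLoop) {i j : ℕ} (hi : i < w.length)
    (hj : j < w.length) (h : w.getVert i = w.getVert j) : i = j := by
  wlog hij : i ≤ j generalizing i j
  · exact (this hj hi h.symm (by omega)).symm
  have := hw.min_le_length hij hj.le (nil.copy rfl h)
  simp only [length_copy, length_nil] at this
  omega

theorem getVert_adj_iff (hw : w.IsShortestOddLoop) {i j : ℕ} (hi : i + 1 < w.length)
    (hj : j + 1 < w.length) : G.Adj (w.getVert i) (w.getVert j) ↔ i + 1 = j ∨ j + 1 = i := by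
  wlog hij : i ≤ j generalizing i j
  · rw [G.adj_comm, this hj hi (by omega), or_comm]
  constructor
  · intro h
    have := hw.min_le_length hij (by omega) h.toWalk
    have hne : i ≠ j := by rintro rfl; exact G.irrefl h
    simp only [Adj.toWalk, length_cons, length_nil] at this
    omega
  · rintro (rfl | rfl)
    · exact w.adj_getVert_succ (by omega)
    · omega

def pathGraphEmbedding (hw : w.IsShortestOddLoop) {t : ℕ} (ht : t < w.length) :
    pathGraph t ↪g G where
  toFun i := w.getVert i
  inj' i j h := Fin.ext (hw.getVert_injOn (by omega) (by omega) h)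
  map_rel_iff' {i j} := by
    rw [pathGraph_adj]
    exact hw.getVert_adj_iff (by omega) (by omega)

end IsShortestOddLoop

end SimpleGraph.Walk

theorem colorable_two_of_hom_cycleZMod {V : Type*} {G : SimpleGraph V} {t k : ℕ}
    (hfree : PFree t G) (hk : t < k) (f : G →g cycleZMod k) : G.Colorable 2 := by
  by_contra h
  obtain ⟨u, w, hw⟩ := Walk.exists_isShortestOddLoop_of_not_colorable_two h
  have hkw : k ≤ w.length := by
    simpa using cycleZMod_le_length_of_odd_loop (w.map f) (by simpa using hw.1)
  exact hfree.false (hw.pathGraphEmbedding (by omega))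

theorem SimpleGraph.Colorable.nonempty_hom_cycleZMod {V : Type*} {G : SimpleGraph V}
    (hG : G.Colorable 2) {k : ℕ} (hk : k ≠ 1) : Nonempty (G →g cycleZMod k) := by
  have : Nontrivial (ZMod k) := ZMod.nontrivial_iff.2 hk
  obtain ⟨c⟩ := hG
  let edgeMap : (⊤ : SimpleGraph (Fin 2)) →g cycleZMod k :=
    ⟨fun i => (i : ZMod k), fun {i j} hij => by
      fin_cases i <;> fin_cases j <;> simp_all [cycleZMod]⟩
  exact ⟨edgeMap.comp c⟩

theorem stmt4_general {V : Type*} (t : ℕ) (ht : 2 ≤ t)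
    (G : SimpleGraph V) (hfree : PFree t G)
    (k k' : ℕ) (hk : t < k) (hk' : t < k') :
    Nonempty (G →g cycleZMod k) ↔ Nonempty (G →g cycleZMod k') :=
  ⟨fun ⟨f⟩ => (colorable_two_of_hom_cycleZMod hfree hk f).nonempty_hom_cycleZMod (by omega),
    fun ⟨f⟩ => (colorable_two_of_hom_cycleZMod hfree hk' f).nonempty_hom_cycleZMod (by omega)⟩

/-- Let `t ≥ 2` and let `G` be a finite connected `P_t`-free graph. Then for all
`k, k' > t`, `G` has a `C_k`-coloring iff it has a `C_{k'}`-coloring. -/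
theorem stmt4 {V : Type*} [Fintype V] (t : ℕ) (ht : 2 ≤ t)
    (G : SimpleGraph V) (hconn : G.Connected) (hfree : PFree t G)
    (k k' : ℕ) (hk : t < k) (hk' : t < k') :
    Nonempty (G →g cycleZMod k) ↔ Nonempty (G →g cycleZMod k') :=
  stmt4_general t ht G hfree k k' hk hk'
end

section
/- Let t, k be natural numbers with k ≥ t + 1 and k ≥ 3, let G be a finite P_t-free graph, and let h be a C_k-coloring of G. Then for every walk W = v_1, …, v_j in G with h(v_1) = h(v_j), the slope s(W) equals 0. -/
/-- The slope of a walk `v 0, v 1, …, v j` with respect to a `C_k`-coloring `h`: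
the number of steps with `h (v (i+1)) - h (v i) = 1` minus the number of steps with
`h (v (i+1)) - h (v i) = -1`. -/
def walkSlope {V : Type*} {k : ℕ} (h : V → ZMod k) {j : ℕ} (v : Fin (j + 1) → V) : ℤ :=
  ((Finset.univ.filter fun i : Fin j => h (v i.succ) - h (v i.castSucc) = 1).card : ℤ) -
  ((Finset.univ.filter fun i : Fin j => h (v i.succ) - h (v i.castSucc) = -1).card : ℤ)

namespace Stmt7Aux

/-- Sign of a step. -/
def eps {V : Type*} {k : ℕ} (h : V → ZMod k) (v : ℕ → V) (i : ℕ) : ℤ :=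
  if h (v (i + 1)) - h (v i) = 1 then 1 else -1

/-- Slope of the first `n` steps of the sequence `v`. -/
def slopeN {V : Type*} {k : ℕ} (h : V → ZMod k) (n : ℕ) (v : ℕ → V) : ℤ :=
  ∑ i ∈ Finset.range n, eps h v i

/-- Walk of length `n` given as a sequence. -/
def IsWalkN {V : Type*} (G : SimpleGraph V) (n : ℕ) (v : ℕ → V) : Prop :=
  ∀ i < n, G.Adj (v i) (v (i + 1))

variable {V : Type*} {k : ℕ}

lemma one_ne_negone (hk : 3 ≤ k) : (1 : ZMod k) ≠ -1 := by
  intro hc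
  have h2 : ((2 : ℕ) : ZMod k) = 0 := by push_cast; linear_combination hc
  rw [ZMod.natCast_eq_zero_iff] at h2
  have := Nat.le_of_dvd (by norm_num) h2
  omega

lemma step_diff (hk : 3 ≤ k) {G : SimpleGraph V} (h : G →g cycleZMod k) {x y : V}
    (a : G.Adj x y) : h y - h x = 1 ∨ h y - h x = -1 := by
  have := h.map_adj a
  rcases this.2 with d | d
  · right; linear_combination -d
  · left; exact d

lemma eps_cast (hk : 3 ≤ k) {G : SimpleGraph V} (h : G →g cycleZMod k) {v : ℕ → V} {i : ℕ}
    (a : G.Adj (v i) (v (i + 1))) :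
    ((eps (⇑h) v i : ℤ) : ZMod k) = h (v (i + 1)) - h (v i) := by
  unfold eps
  rcases step_diff hk h a with d | d
  · rw [if_pos d, d]; push_cast; ring
  · have hne : h (v (i + 1)) - h (v i) ≠ 1 := by
      rw [d]; exact fun hc => one_ne_negone hk hc.symm
    rw [if_neg hne, d]; push_cast; ring

lemma slope_cast (hk : 3 ≤ k) {G : SimpleGraph V} (h : G →g cycleZMod k) (v : ℕ → V)
    (n : ℕ) (hw : ∀ i < n, G.Adj (v i) (v (i + 1))) :
    ((slopeN (⇑h) n v : ℤ) : ZMod k) = h (v n) - h (v 0) := by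
  induction n with
  | zero => simp [slopeN]
  | succ n ih =>
    have ih' := ih (fun i hi => hw i (by omega))
    unfold slopeN at *
    rw [Finset.sum_range_succ]
    push_cast
    push_cast at ih'
    rw [ih', eps_cast hk h (hw n (by omega))]
    ring

lemma abs_eps_le (h : V → ZMod k) (v : ℕ → V) (i : ℕ) : |eps h v i| ≤ 1 := by
  unfold eps; split <;> simp

lemma slope_sub (h : V → ZMod k) (v : ℕ → V) {a b : ℕ} (hab : a ≤ b) :
    slopeN h b v - slopeN h a v = ∑ i ∈ Finset.Ico a b, eps h v i := by
  unfold slopeN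
  rw [Finset.range_eq_Ico, ← Finset.sum_Ico_consecutive (eps h v) (Nat.zero_le a) hab, Finset.range_eq_Ico]
  ring

lemma abs_slope_sub_le (h : V → ZMod k) (v : ℕ → V) {a b : ℕ} (hab : a ≤ b) :
    |slopeN h b v - slopeN h a v| ≤ (b : ℤ) - a := by
  rw [slope_sub h v hab]
  calc |∑ i ∈ Finset.Ico a b, eps h v i| ≤ ∑ i ∈ Finset.Ico a b, |eps h v i| :=
        Finset.abs_sum_le_sum_abs _ _
    _ ≤ ∑ _i ∈ Finset.Ico a b, (1 : ℤ) :=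
        Finset.sum_le_sum (fun i _ => abs_eps_le h v i)
    _ = (b : ℤ) - a := by
        rw [Finset.sum_const, Nat.card_Ico, nsmul_eq_mul, mul_one]; omega

lemma abs_slope_le (h : V → ZMod k) (v : ℕ → V) (n : ℕ) :
    |slopeN h n v| ≤ (n : ℤ) := by
  have := abs_slope_sub_le h v (Nat.zero_le n)
  simpa [slopeN] using this

lemma sum_eps_shift (h : V → ZMod k) (v v' : ℕ → V) (c d m : ℕ)
    (hv' : ∀ i, c ≤ i → v' i = v (i + d)) :
    ∑ i ∈ Finset.Ico c m, eps h v' i = ∑ i ∈ Finset.Ico (c + d) (m + d), eps h v i := by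
  rw [Finset.sum_Ico_eq_sum_range, Finset.sum_Ico_eq_sum_range]
  rw [Nat.add_sub_add_right]
  refine Finset.sum_congr rfl fun i _ => ?_
  unfold eps
  rw [hv' (c + i) (by omega), hv' (c + i + 1) (by omega),
    show c + i + d = c + d + i from by omega, show c + i + 1 + d = c + d + i + 1 from by omega]

lemma splice_glue {G : SimpleGraph V} (h : V → ZMod k) (v : ℕ → V) (n a b : ℕ)
    (hab : a < b) (hbn : b ≤ n) (hw : IsWalkN G n v) (hglue : v a = v b) :
    ∃ v' : ℕ → V, IsWalkN G (n - (b - a)) v' ∧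
      slopeN h (n - (b - a)) v' = slopeN h a v + (slopeN h n v - slopeN h b v) := by
  classical
  obtain ⟨d, hd⟩ : ∃ d, b = a + d := ⟨b - a, by omega⟩
  obtain ⟨m, hmn⟩ : ∃ m, n = m + d := ⟨n - d, by omega⟩
  have hnm : n - (b - a) = m := by omega
  have ham : a ≤ m := by omega
  rw [hnm]
  set v' : ℕ → V := fun i => if i ≤ a then v i else v (i + d) with hv'def
  have hv'le : ∀ i, i ≤ a → v' i = v i := by
    intro i hi; simp only [hv'def, if_pos hi]
  have hv'gt : ∀ i, a ≤ i → v' i = v (i + d) := by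
    intro i hi
    by_cases h2 : i ≤ a
    · have hia : i = a := by omega
      rw [hv'le i h2, hia, hglue]
      exact congrArg v (by omega)
    · simp only [hv'def, if_neg h2]
  refine ⟨v', ?_, ?_⟩
  · intro i hi
    by_cases h1 : i + 1 ≤ a
    · rw [hv'le i (by omega), hv'le (i + 1) h1]
      exact hw i (by omega)
    · rw [hv'gt i (by omega), hv'gt (i + 1) (by omega),
        show i + 1 + d = (i + d) + 1 from by omega]
      exact hw (i + d) (by omega)
  · have heq1 : ∀ i < a, eps h v' i = eps h v i := by
      intro i hi
      unfold eps
      rw [hv'le i (by omega), hv'le (i + 1) (by omega)]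
    have h2 := sum_eps_shift h v v' a d m hv'gt
    have hsplit : slopeN h m v' = ∑ i ∈ Finset.Ico 0 a, eps h v' i
        + ∑ i ∈ Finset.Ico a m, eps h v' i := by
      unfold slopeN
      rw [Finset.range_eq_Ico, ← Finset.sum_Ico_consecutive _ (Nat.zero_le a) ham]
    have h1 : ∑ i ∈ Finset.Ico 0 a, eps h v' i = slopeN h a v := by
      rw [Finset.sum_congr rfl (fun i hi => heq1 i (Finset.mem_Ico.mp hi).2)]
      unfold slopeN
      rw [Finset.range_eq_Ico]
    have h3 : ∑ i ∈ Finset.Ico a m, eps h v' i = slopeN h n v - slopeN h b v := by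
      rw [h2, show a + d = b from by omega, show m + d = n from by omega,
        ← slope_sub h v hbn]
    rw [hsplit, h1, h3]

lemma splice_chord {G : SimpleGraph V} (h : V → ZMod k) (v : ℕ → V) (n a b : ℕ)
    (hab : a + 2 ≤ b) (hbn : b ≤ n) (hw : IsWalkN G n v) (hadj : G.Adj (v a) (v b)) :
    ∃ v' : ℕ → V, IsWalkN G (n - (b - a - 1)) v' ∧
      slopeN h (n - (b - a - 1)) v' =
        slopeN h a v + (if h (v b) - h (v a) = 1 then 1 else -1)
          + (slopeN h n v - slopeN h b v) := by
  classical
  obtain ⟨d, hd⟩ : ∃ d, b = a + 1 + d := ⟨b - a - 1, by omega⟩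
  obtain ⟨m, hmn⟩ : ∃ m, n = m + d := ⟨n - d, by omega⟩
  have hnm : n - (b - a - 1) = m := by omega
  have ham : a + 1 ≤ m := by omega
  rw [hnm]
  set v' : ℕ → V := fun i => if i ≤ a then v i else v (i + d) with hv'def
  have hv'le : ∀ i, i ≤ a → v' i = v i := by
    intro i hi; simp only [hv'def, if_pos hi]
  have hv'gt : ∀ i, a + 1 ≤ i → v' i = v (i + d) := by
    intro i hi; simp only [hv'def, if_neg (by omega : ¬ i ≤ a)]
  refine ⟨v', ?_, ?_⟩
  · intro i hi
    by_cases h1 : i + 1 ≤ a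
    · rw [hv'le i (by omega), hv'le (i + 1) h1]
      exact hw i (by omega)
    · by_cases h2 : i ≤ a
      · have hia : i = a := by omega
        rw [hv'le i h2, hv'gt (i + 1) (by omega), hia,
          show a + 1 + d = b from by omega]
        exact hadj
      · rw [hv'gt i (by omega), hv'gt (i + 1) (by omega),
          show i + 1 + d = (i + d) + 1 from by omega]
        exact hw (i + d) (by omega)
  · have heq1 : ∀ i < a, eps h v' i = eps h v i := by
      intro i hi
      unfold eps
      rw [hv'le i (by omega), hv'le (i + 1) (by omega)]
    have hsplit : slopeN h m v' = ∑ i ∈ Finset.Ico 0 a, eps h v' i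
        + (eps h v' a + ∑ i ∈ Finset.Ico (a + 1) m, eps h v' i) := by
      unfold slopeN
      rw [Finset.range_eq_Ico, ← Finset.sum_Ico_consecutive _ (Nat.zero_le a) (by omega : a ≤ m),
        Finset.sum_eq_sum_Ico_succ_bot (by omega : a < m)]
    have h1 : ∑ i ∈ Finset.Ico 0 a, eps h v' i = slopeN h a v := by
      rw [Finset.sum_congr rfl (fun i hi => heq1 i (Finset.mem_Ico.mp hi).2)]
      unfold slopeN
      rw [Finset.range_eq_Ico]
    have hepsa : eps h v' a = if h (v b) - h (v a) = 1 then 1 else -1 := by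
      unfold eps
      rw [hv'le a le_rfl, hv'gt (a + 1) le_rfl, show a + 1 + d = b from by omega]
    have h3 : ∑ i ∈ Finset.Ico (a + 1) m, eps h v' i = slopeN h n v - slopeN h b v := by
      rw [sum_eps_shift h v v' (a + 1) d m hv'gt, show a + 1 + d = b from by omega,
        show m + d = n from by omega, ← slope_sub h v hbn]
    rw [hsplit, h1, h3, hepsa]
    ring
lemma slope_lt {V : Type*} {k t : ℕ} (htk : t + 1 ≤ k) (hk : 3 ≤ k) {G : SimpleGraph V}
    (hfree : PFree t G) (h : G →g cycleZMod k) :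
    ∀ n (v : ℕ → V), IsWalkN G n v → |slopeN (⇑h) n v| < (k : ℤ) := by
  classical
  by_contra hcon
  push_neg at hcon
  obtain ⟨n₁, v₁, hw₁, hs₁⟩ := hcon
  have hT : ∃ n, ∃ v : ℕ → V, IsWalkN G n v ∧ (k : ℤ) ≤ |slopeN (⇑h) n v| :=
    ⟨n₁, v₁, hw₁, hs₁⟩
  have hspec := Nat.find_spec hT
  have hminN := fun m (hm : m < Nat.find hT) => Nat.find_min hT hm
  set n₀ := Nat.find hT with hn₀def
  obtain ⟨w, hw, hs⟩ := hspec
  have hmin : ∀ m, m < n₀ → ∀ u : ℕ → V, IsWalkN G m u → |slopeN (⇑h) m u| < (k : ℤ) := by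
    intro m hm u hu
    by_contra hcc
    push_neg at hcc
    exact hminN m hm ⟨u, hu, hcc⟩
  have hkZ : (3 : ℤ) ≤ (k : ℤ) := by exact_mod_cast hk
  have htkZ : (t : ℤ) + 1 ≤ (k : ℤ) := by exact_mod_cast htk
  have hkn : (k : ℤ) ≤ (n₀ : ℤ) := le_trans hs (abs_slope_le _ w n₀)
  have hkn' : k ≤ n₀ := by exact_mod_cast hkn
  have hlev : ∀ a b : ℕ, a ≤ b → b ≤ n₀ →
      ((slopeN (⇑h) b w - slopeN (⇑h) a w : ℤ) : ZMod k) = h (w b) - h (w a) := by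
    intro a b hab hbn
    have h1 := slope_cast hk h w b (fun i hi => hw i (by omega))
    have h2 := slope_cast hk h w a (fun i hi => hw i (by omega))
    push_cast
    rw [h1, h2]
    ring
  -- injectivity of the first t vertices
  have hinj : ∀ a b : ℕ, a < b → b < t → w a ≠ w b := by
    intro a b hab hbt heq
    have hbn : b ≤ n₀ := by omega
    have hc := hlev a b (by omega) hbn
    rw [heq, sub_self] at hc
    have hdvd : (k : ℤ) ∣ (slopeN (⇑h) b w - slopeN (⇑h) a w) :=
      (ZMod.intCast_zmod_eq_zero_iff_dvd _ _).mp hc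
    have hbd := abs_slope_sub_le (⇑h) w (le_of_lt hab)
    have hbZ : (b : ℤ) < (t : ℤ) := by exact_mod_cast hbt
    have haZ : (0 : ℤ) ≤ (a : ℤ) := Int.natCast_nonneg a
    have he0 : slopeN (⇑h) b w - slopeN (⇑h) a w = 0 := by
      by_contra hne
      have hge := Int.le_of_dvd (abs_pos.mpr hne) ((dvd_abs _ _).mpr hdvd)
      linarith
    obtain ⟨v', hw', hs'⟩ := splice_glue (⇑h) w n₀ a b hab hbn hw heq
    have hlt := hmin (n₀ - (b - a)) (by omega) v' hw'
    rw [hs'] at hlt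
    have heqs : slopeN (⇑h) a w + (slopeN (⇑h) n₀ w - slopeN (⇑h) b w)
        = slopeN (⇑h) n₀ w := by linarith
    rw [heqs] at hlt
    linarith
  -- no chords among the first t vertices
  have hnochord : ∀ a b : ℕ, a + 2 ≤ b → b < t → ¬ G.Adj (w a) (w b) := by
    intro a b hab hbt hadj
    have hbn : b ≤ n₀ := by omega
    have hc := hlev a b (by omega) hbn
    have hbd := abs_slope_sub_le (⇑h) w (by omega : a ≤ b)
    have hbZ : (b : ℤ) < (t : ℤ) := by exact_mod_cast hbt
    have haZ : (0 : ℤ) ≤ (a : ℤ) := Int.natCast_nonneg a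
    have hd2 := step_diff hk h hadj
    set e := slopeN (⇑h) b w - slopeN (⇑h) a w with he
    have habs1 : |e - 1| ≤ |e| + 1 := by
      rw [sub_eq_add_neg]
      exact (abs_add_le e (-1)).trans (by norm_num)
    have habs2 : |e + 1| ≤ |e| + 1 :=
      (abs_add_le e 1).trans (by norm_num)
    have heval : e = 1 ∨ e = -1 := by
      rcases hd2 with d | d
      · left
        have hz : ((e - 1 : ℤ) : ZMod k) = 0 := by push_cast; rw [hc, d]; ring
        have hdvd := (ZMod.intCast_zmod_eq_zero_iff_dvd _ _).mp hz
        by_contra hne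
        have hne' : e - 1 ≠ 0 := fun hcc => hne (by linarith [hcc])
        have hge := Int.le_of_dvd (abs_pos.mpr hne') ((dvd_abs _ _).mpr hdvd)
        linarith
      · right
        have hz : ((e + 1 : ℤ) : ZMod k) = 0 := by push_cast; rw [hc, d]; ring
        have hdvd := (ZMod.intCast_zmod_eq_zero_iff_dvd _ _).mp hz
        by_contra hne
        have hne' : e + 1 ≠ 0 := fun hcc => hne (by linarith [hcc])
        have hge := Int.le_of_dvd (abs_pos.mpr hne') ((dvd_abs _ _).mpr hdvd)
        linarith
    obtain ⟨v', hw', hs'⟩ := splice_chord (⇑h) w n₀ a b hab hbn hw hadj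
    have hstep : (if h (w b) - h (w a) = 1 then (1 : ℤ) else -1) = e := by
      rcases heval with h1 | h1
      · have hde : h (w b) - h (w a) = 1 := by
          rw [← hc, h1]; push_cast; ring
        rw [if_pos hde, h1]
      · have hde : h (w b) - h (w a) = -1 := by
          rw [← hc, h1]; push_cast; ring
        have hne : h (w b) - h (w a) ≠ 1 := by
          rw [hde]; exact fun hcc => one_ne_negone hk hcc.symm
        rw [if_neg hne, h1]
    rw [hstep] at hs'
    have hlt := hmin (n₀ - (b - a - 1)) (by omega) v' hw'
    rw [hs'] at hlt
    have heqs : slopeN (⇑h) a w + e + (slopeN (⇑h) n₀ w - slopeN (⇑h) b w)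
        = slopeN (⇑h) n₀ w := by rw [he]; ring
    rw [heqs] at hlt
    linarith
  -- build an induced path on t vertices
  have htn : t ≤ n₀ := by omega
  refine hfree.false ⟨⟨fun i : Fin t => w i.val, ?_⟩, ?_⟩
  · intro a b hab
    by_contra hne
    have hne' : a.val ≠ b.val := fun hcc => hne (Fin.ext hcc)
    rcases Nat.lt_or_ge a.val b.val with h1 | h1
    · exact hinj a.val b.val h1 b.isLt hab
    · exact hinj b.val a.val (by omega) a.isLt hab.symm
  · intro a b
    have hat := a.isLt
    have hbt := b.isLt
    constructor
    · intro hadj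
      rw [SimpleGraph.pathGraph_adj]
      rcases Nat.lt_trichotomy a.val b.val with h1 | h1 | h1
      · left
        by_contra hne
        exact hnochord a.val b.val (by omega) b.isLt hadj
      · exfalso
        have hab : a = b := Fin.ext h1
        subst hab
        exact G.irrefl hadj
      · right
        by_contra hne
        exact hnochord b.val a.val (by omega) a.isLt hadj.symm
    · intro hp
      rw [SimpleGraph.pathGraph_adj] at hp
      rcases hp with h1 | h1
      · have hadj := hw a.val (by omega)
        show G.Adj (w a.val) (w b.val)
        rw [← h1]
        exact hadj
      · have hadj := hw b.val (by omega)
        show G.Adj (w a.val) (w b.val)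
        rw [← h1]
        exact hadj.symm

end Stmt7Aux

open Stmt7Aux in
/-- Let `k ≥ t + 1`, `k ≥ 3`, let `G` be a finite `P_t`-free graph and `h` a
`C_k`-coloring of `G`. Then every walk in `G` whose endpoints receive the same color
has slope `0`. -/
theorem stmt7 {V : Type*} [Fintype V] (t k : ℕ) (htk : t + 1 ≤ k) (hk : 3 ≤ k)
    (G : SimpleGraph V) (hfree : PFree t G)
    (h : G →g cycleZMod k) (j : ℕ) (v : Fin (j + 1) → V)
    (hwalk : ∀ i : Fin j, G.Adj (v i.castSucc) (v i.succ))
    (hclosed : h (v 0) = h (v (Fin.last j))) :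
    walkSlope (⇑h) v = 0 := by
  classical
  set w : ℕ → V := fun n => v ⟨min n j, by omega⟩ with hwdef
  have hvw : ∀ m (hm : m ≤ j), w m = v ⟨m, by omega⟩ := by
    intro m hm
    simp only [hwdef]
    congr 1
    exact Fin.ext (by simpa using hm)
  have hwalkN : IsWalkN G j w := by
    intro i hi
    rw [hvw i (by omega), hvw (i + 1) (by omega)]
    exact hwalk ⟨i, hi⟩
  have hws : walkSlope (⇑h) v
      = ∑ i : Fin j, (if h (v i.succ) - h (v i.castSucc) = 1 then (1 : ℤ) else -1) := by
    unfold walkSlope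
    rw [← Finset.sum_boole, ← Finset.sum_boole, ← Finset.sum_sub_distrib]
    refine Finset.sum_congr rfl fun i _ => ?_
    rcases step_diff hk h (hwalk i) with d | d
    · simp [d, one_ne_negone hk]
    · have h1 : (-1 : ZMod k) ≠ 1 := fun hc => one_ne_negone hk hc.symm
      simp [d, h1]
  have h2 : ∑ i : Fin j, (if h (v i.succ) - h (v i.castSucc) = 1 then (1 : ℤ) else -1)
      = slopeN (⇑h) j w := by
    unfold slopeN
    rw [Finset.sum_range]
    refine Finset.sum_congr rfl fun i _ => ?_
    unfold eps
    rw [hvw i.val (by omega), hvw (i.val + 1) (by omega)]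
    rfl
  have hdvd : (k : ℤ) ∣ slopeN (⇑h) j w := by
    have hc := slope_cast hk h w j hwalkN
    have hee : h (w j) = h (w 0) := by
      rw [hvw j le_rfl, hvw 0 (by omega)]
      exact hclosed.symm
    rw [hee, sub_self] at hc
    exact (ZMod.intCast_zmod_eq_zero_iff_dvd _ _).mp hc
  have hlt := slope_lt htk hk hfree h j w hwalkN
  have hz : slopeN (⇑h) j w = 0 := by
    by_contra hne
    have := Int.le_of_dvd (abs_pos.mpr hne) ((dvd_abs _ _).mpr hdvd)
    linarith
  rw [hws, h2, hz]
end

section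
/- Let s ≥ 2 be an integer, let P be the path graph on s + 1 vertices (i.e., with s edges) and endpoints a and b, and let i ∈ ZMod (2s+1). Then for c ∈ ZMod (2s+1), there exists a C_{2s+1}-coloring h of P with h(a) = i and h(b) = c if and only if c = i + s − 2j in ZMod (2s+1) for some integer j with 0 ≤ j ≤ s. -/
/-!
Along a `C_n`-coloring of a path every step changes the colour by `±1`, so after `m` steps
the colour has moved by `m - 2j`, where `j ≤ m` counts the downward steps. Conversely, going
up `m - j` times and then down `j` times realises `m - 2j`.
-/

namespace SimpleGraph

variable {V : Type*} {G : SimpleGraph V} {m : ℕ}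

def pathGraphHomOfAdj (f : ℕ → V) (hf : ∀ t < m, G.Adj (f t) (f (t + 1))) :
    pathGraph (m + 1) →g G where
  toFun t := f t
  map_rel' {u v} huv := by
    rcases pathGraph_adj.mp huv with h | h
    · simpa [← h] using hf u (by omega)
    · simpa [← h] using (hf v (by omega)).symm

theorem pathGraph_adj_succ (t : ℕ) (ht : t < m) :
    (pathGraph (m + 1)).Adj ⟨t, by omega⟩ ⟨t + 1, by omega⟩ :=
  pathGraph_adj.mpr (Or.inl rfl)

end SimpleGraph

namespace cycleZMod

variable {n m : ℕ}

theorem eq_add_one_or_eq_sub_one_of_adj {u v : ZMod n} (h : (cycleZMod n).Adj u v) :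
    v = u + 1 ∨ v = u - 1 := by
  rcases h.2 with h | h
  · exact Or.inr (by linear_combination -h)
  · exact Or.inl (by linear_combination h)

theorem adj_iff [Fact (1 < n)] {u v : ZMod n} :
    (cycleZMod n).Adj u v ↔ v = u + 1 ∨ v = u - 1 := by
  refine ⟨eq_add_one_or_eq_sub_one_of_adj, fun h => ⟨fun huv => one_ne_zero (α := ZMod n) ?_, ?_⟩⟩
  · rcases h with rfl | rfl
    · linear_combination -huv
    · linear_combination huv
  · rcases h with rfl | rfl
    · exact Or.inr (by ring)
    · exact Or.inl (by ring)

theorem exists_apply_eq_of_pathGraph_hom (h : SimpleGraph.pathGraph (m + 1) →g cycleZMod n)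
    (t : ℕ) (ht : t ≤ m) :
    ∃ j ≤ t, h ⟨t, by omega⟩ = h 0 + t - 2 * (j : ZMod n) := by
  induction t with
  | zero => exact ⟨0, le_rfl, by simp⟩
  | succ t ih =>
    obtain ⟨j, hj, hval⟩ := ih (by omega)
    rcases eq_add_one_or_eq_sub_one_of_adj
        (h.map_rel (SimpleGraph.pathGraph_adj_succ t (by omega))) with hstep | hstep
    · exact ⟨j, by omega, by rw [hstep, hval]; push_cast; ring⟩
    · exact ⟨j + 1, by omega, by rw [hstep, hval]; push_cast; ring⟩

theorem exists_pathGraph_hom_of_le [Fact (1 < n)] (i : ZMod n) {j : ℕ} (hj : j ≤ m) :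
    ∃ h : SimpleGraph.pathGraph (m + 1) →g cycleZMod n,
      h 0 = i ∧ h (Fin.last m) = i + m - 2 * (j : ZMod n) := by
  -- up for the first `m - j` steps, then down; `t - (m - j)` is truncated subtraction
  let f : ℕ → ZMod n := fun t => i + t - 2 * ((t - (m - j) : ℕ) : ZMod n)
  have hf : ∀ t < m, (cycleZMod n).Adj (f t) (f (t + 1)) := by
    intro t _
    rw [adj_iff]
    rcases le_or_gt (m - j) t with hle | hlt
    · right
      simp only [f, Nat.sub_add_comm hle]
      push_cast
      ring
    · left
      simp only [f, Nat.sub_eq_zero_of_le hlt.le, Nat.sub_eq_zero_of_le hlt]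
      push_cast
      ring
  refine ⟨SimpleGraph.pathGraphHomOfAdj f hf, by simp [SimpleGraph.pathGraphHomOfAdj, f], ?_⟩
  simp only [SimpleGraph.pathGraphHomOfAdj, RelHom.coeFn_mk, Fin.val_last, f,
    Nat.sub_sub_self hj]

theorem exists_pathGraph_hom_iff [Fact (1 < n)] (i c : ZMod n) :
    (∃ h : SimpleGraph.pathGraph (m + 1) →g cycleZMod n, h 0 = i ∧ h (Fin.last m) = c) ↔
      ∃ j ≤ m, c = i + m - 2 * (j : ZMod n) := by
  constructor
  · rintro ⟨h, rfl, rfl⟩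
    exact exists_apply_eq_of_pathGraph_hom h m le_rfl
  · rintro ⟨j, hj, rfl⟩
    exact exists_pathGraph_hom_of_le i hj

end cycleZMod

/-- Let `s ≥ 2`, let `P` be the path on `s + 1` vertices (with `s` edges) with endpoints
`a` and `b`, and let `i ∈ ZMod (2s+1)`. For `c ∈ ZMod (2s+1)` there is a `C_{2s+1}`-coloring
`h` of `P` with `h a = i` and `h b = c` iff `c = i + s - 2j` for some integer `0 ≤ j ≤ s`. -/
theorem stmt11 (s : ℕ) (hs : 2 ≤ s) (i c : ZMod (2 * s + 1)) :
    (∃ h : SimpleGraph.pathGraph (s + 1) →g cycleZMod (2 * s + 1),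
        h 0 = i ∧ h (Fin.last s) = c) ↔
      ∃ j : ℕ, j ≤ s ∧
        c = i + (s : ZMod (2 * s + 1)) - 2 * (j : ZMod (2 * s + 1)) := by
  have : Fact (1 < 2 * s + 1) := ⟨by omega⟩
  exact cycleZMod.exists_pathGraph_hom_iff i c
end
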